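/- Let n ≥ 2, let U ⊆ ℂ^n be open, let U' ⊆ ℂ^{n−1} be a connected open set containing the image of U under the projection onto the first n−1 coordinates, and let F be a nonconstant holomorphic function on U'. Define f : U → ℂ by f(z₁,…,z_n) = F(z₁,…,z_{n−1}). Then every point of {z ∈ U : f(z) = 0} belongs to the closure of the set W' = {z ∈ U : f(z) ≠ 0 and z_n = exp(1/f(z))}. -/

import Mathlib

open Complex Set

noncomputable section

abbrev Cn (n : ℕ) : Type := Fin n → ℂ

/-- `f` is holomorphic on `V` : complex Fréchet differentiable at each point of `V`. -/
def HoloOn {n : ℕ} {F : Type} [NormedAddCommGroup F] [NormedSpace ℂ F]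
    (f : Cn n → F) (V : Set (Cn n)) : Prop :=
  ∀ z ∈ V, DifferentiableAt ℂ f z

/-- Multiplication by `i` as an `ℝ`-linear map on `ℂⁿ`. -/
def mulI (n : ℕ) : Cn n →ₗ[ℝ] Cn n where
  toFun v := Complex.I • v
  map_add' v w := smul_add _ v w
  map_smul' c v := smul_comm Complex.I c v

/-- The Levi form of `ρ` is positive on nonzero vectors, at every point of `N`. -/
def LeviPositive {n : ℕ} (ρ : Cn n → ℝ) (N : Set (Cn n)) : Prop :=
  ∀ z ∈ N, ∀ v : Cn n, v ≠ 0 →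
    0 < (1/4 : ℝ) * (iteratedFDeriv ℝ 2 ρ z ![v, v]
      + iteratedFDeriv ℝ 2 ρ z ![Complex.I • v, Complex.I • v])

/-- Strongly pseudoconvex domain with smooth boundary (boundedness stated separately). -/
def IsSPSCDomain (n : ℕ) (Ω : Set (Cn n)) : Prop :=
  IsOpen Ω ∧ IsConnected Ω ∧
  ∃ (N : Set (Cn n)) (ρ : Cn n → ℝ), IsOpen N ∧ frontier Ω ⊆ N ∧
    ContDiffOn ℝ (⊤ : ℕ∞) ρ N ∧ Ω ∩ N = {z ∈ N | ρ z < 0} ∧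
    (∀ z ∈ frontier Ω, fderiv ℝ ρ z ≠ 0) ∧ LeviPositive ρ N

/-- The hull of `K` w.r.t. functions holomorphic on neighborhoods of `closure Ω`. -/
def hullIn (n : ℕ) (Ω K : Set (Cn n)) : Set (Cn n) :=
  {z ∈ closure Ω | ∀ V : Set (Cn n), IsOpen V → closure Ω ⊆ V →
    ∀ f : Cn n → ℂ, HoloOn f V → ‖f z‖ ≤ ⨆ w ∈ K, ‖f w‖}

/-- `A` is a relatively open subset of `S`. -/
def RelOpenIn {n : ℕ} (S A : Set (Cn n)) : Prop :=
  ∃ U : Set (Cn n), IsOpen U ∧ A = U ∩ S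

/-- The boundary of `A` inside `S` (for `A` relatively open in `S`). -/
def bdryIn {n : ℕ} (S A : Set (Cn n)) : Set (Cn n) := (closure A ∩ S) \ A

/-- `φ` is a local defining map for `M` near `p`. -/
def IsLocalDefiningMap {n k : ℕ} (M : Set (Cn n)) (p : Cn n)
    (V : Set (Cn n)) (φ : Cn n → Fin k → ℝ) : Prop :=
  IsOpen V ∧ p ∈ V ∧ ContDiffOn ℝ (⊤ : ℕ∞) φ V ∧
    (∀ z ∈ V, Function.Surjective (fderiv ℝ φ z)) ∧
    M ∩ V = {z ∈ V | φ z = 0}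

/-- The tangent space `ker Dφ(p)` as an `ℝ`-subspace of `ℂⁿ`. -/
def tangentAt {n k : ℕ} (φ : Cn n → Fin k → ℝ) (p : Cn n) : Submodule ℝ (Cn n) :=
  LinearMap.ker (fderiv ℝ φ p).toLinearMap

/-- `M` is a maximally complex `(2m+1)`-dimensional closed real submanifold of `A`. -/
def IsMaxCplxSubmanifold (n m : ℕ) (A M : Set (Cn n)) : Prop :=
  M ⊆ A ∧ closure M ∩ A ⊆ M ∧
  ∀ p ∈ M, ∃ (V : Set (Cn n)) (φ : Cn n → Fin (2*n - (2*m+1)) → ℝ),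
    IsLocalDefiningMap M p V φ ∧
    Module.finrank ℝ
      ↥(tangentAt φ p ⊓ Submodule.map (mulI n) (tangentAt φ p)) = 2*m

/-- The level set of `f` through `p` meets `M` transversally at `p`:
`ker Df(p) + T_pM = ℂⁿ` as real vector spaces. -/
def TransversalAt (n m : ℕ) (M : Set (Cn n)) (f : Cn n → ℂ) (p : Cn n) : Prop :=
  ∀ (V : Set (Cn n)) (φ : Cn n → Fin (2*n - (2*m+1)) → ℝ),
    IsLocalDefiningMap M p V φ →
    LinearMap.ker ((fderiv ℂ f p).restrictScalars ℝ).toLinearMap ⊔ tangentAt φ p = ⊤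

/-- `p` is a regular point of the `k`-dimensional variety `W`. -/
def IsVarietyRegularPoint (n k : ℕ) (W : Set (Cn n)) (p : Cn n) : Prop :=
  ∃ (V : Set (Cn n)) (F : Cn n → Fin (n - k) → ℂ), IsOpen V ∧ p ∈ V ∧
    HoloOn F V ∧ (∀ z ∈ V, Function.Surjective (fderiv ℂ F z)) ∧
    W ∩ V = {z ∈ V | F z = 0}

/-- `W` is a `k`-dimensional complex variety in the open set `G`. -/
def IsComplexVariety (n k : ℕ) (G W : Set (Cn n)) : Prop :=
  W ⊆ G ∧ closure W ∩ G ⊆ W ∧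
  (∀ p ∈ W, ∃ (V : Set (Cn n)) (ι : Type) (g : ι → Cn n → ℂ),
    IsOpen V ∧ p ∈ V ∧ V ⊆ G ∧ (∀ i, HoloOn (g i) V) ∧
    W ∩ V = {z ∈ V | ∀ i, g i z = 0}) ∧
  W ⊆ closure {p ∈ W | IsVarietyRegularPoint n k W p}

/-- The singular set of `W` is closed and discrete in `G`. -/
def HasIsolatedSingularities (n k : ℕ) (G W : Set (Cn n)) : Prop :=
  closure {p ∈ W | ¬ IsVarietyRegularPoint n k W p} ∩ G
      ⊆ {p ∈ W | ¬ IsVarietyRegularPoint n k W p} ∧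
  ∀ p ∈ W, ¬ IsVarietyRegularPoint n k W p →
    ∃ V : Set (Cn n), IsOpen V ∧ p ∈ V ∧
      {q ∈ W | ¬ IsVarietyRegularPoint n k W q} ∩ V = {p}

/-!
On a complex line a holomorphic function of several variables is a holomorphic function of one
variable, which carries the identity theorem and the local open mapping theorem over to `F`.
Being nonconstant on the connected set `U'`, `F` is thus open at each of its zeros `w'`: it takes
every small value `ζ` near `w'`. As `ζ → 0`, `exp (1 / ζ)` comes arbitrarily close to every
`c ∈ ℂ` (it equals `c ≠ 0` at `ζ = (log c + 2πik)⁻¹`), so the points `(z', exp (1 / F z'))` with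
`z'` near `w'` accumulate at `(w', c)` for every `c`.
-/

open Filter Topology Metric
open scoped Real

section ComplexLines

variable {E G : Type*} [NormedAddCommGroup E] [NormedSpace ℂ E]
  [NormedAddCommGroup G] [NormedSpace ℂ G] [CompleteSpace G]

theorem Convex.setOf_add_smul_mem {s : Set E} (hs : Convex ℝ s) (a d : E) :
    Convex ℝ {t : ℂ | a + t • d ∈ s} := by
  intro x hx y hy α β hα hβ hαβ
  have h : a + (α • x + β • y) • d = α • (a + x • d) + β • (a + y • d) := by
    obtain rfl : β = 1 - α := by linarith
    simp only [smul_add, add_smul, smul_assoc]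
    module
  simpa only [mem_ofPred_eq, h] using hs hx hy hα hβ hαβ

theorem DifferentiableOn.analyticOnNhd_comp_line {f : E → G} {s : Set E}
    (hf : DifferentiableOn ℂ f s) (hs : IsOpen s) (a d : E) :
    AnalyticOnNhd ℂ (fun t : ℂ => f (a + t • d)) {t | a + t • d ∈ s} :=
  (hf.comp (f := fun t : ℂ => a + t • d) (by fun_prop) fun _ ht => ht).analyticOnNhd
    (hs.preimage (by fun_prop))

theorem DifferentiableOn.eqOn_of_convex_of_eventuallyEq {f g : E → G} {s : Set E}
    (hf : DifferentiableOn ℂ f s) (hg : DifferentiableOn ℂ g s) (hs : IsOpen s)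
    (hsc : Convex ℝ s) {a : E} (ha : a ∈ s) (hfg : f =ᶠ[𝓝 a] g) : EqOn f g s := by
  intro b hb
  have hline : Tendsto (fun t : ℂ => a + t • (b - a)) (𝓝 0) (𝓝 a) := by
    simpa using (Continuous.tendsto (by fun_prop) 0 :
      Tendsto (fun t : ℂ => a + t • (b - a)) _ _)
  have := (hf.analyticOnNhd_comp_line hs a (b - a)).eqOn_of_preconnected_of_eventuallyEq
    (hg.analyticOnNhd_comp_line hs a (b - a)) (hsc.setOf_add_smul_mem a (b - a)).isPreconnected
    (by simpa using ha) (hline.eventually hfg) (show (1 : ℂ) ∈ _ by simpa using hb)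
  simpa using this

theorem DifferentiableOn.eqOn_of_preconnected_of_eventuallyEq {f g : E → G} {U : Set E}
    (hf : DifferentiableOn ℂ f U) (hg : DifferentiableOn ℂ g U) (hU : IsOpen U)
    (hU' : IsPreconnected U) {a : E} (ha : a ∈ U) (hfg : f =ᶠ[𝓝 a] g) : EqOn f g U := by
  have hsub : U ⊆ {z | f =ᶠ[𝓝 z] g} := by
    refine hU'.subset_of_closure_inter_subset isOpen_setOfPred_eventually_nhds ⟨a, ha, hfg⟩ ?_
    rintro z ⟨hz, hzU⟩
    obtain ⟨r, hr, hrU⟩ := Metric.isOpen_iff.1 hU z hzU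
    obtain ⟨b, hb, hbfg⟩ := mem_closure_iff_nhds.1 hz (ball z r) (ball_mem_nhds z hr)
    exact ((hf.mono hrU).eqOn_of_convex_of_eventuallyEq (hg.mono hrU) isOpen_ball
      (convex_ball z r) hb hbfg).eventuallyEq_of_mem (ball_mem_nhds z hr)
  exact fun z hz => (hsub hz).self_of_nhds

theorem eventually_constant_or_nhds_le_map_nhds_of_differentiableAt {f : E → ℂ} {a : E}
    (hf : ∀ᶠ z in 𝓝 a, DifferentiableAt ℂ f z) :
    (∀ᶠ z in 𝓝 a, f z = f a) ∨ 𝓝 (f a) ≤ map f (𝓝 a) := by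
  refine or_iff_not_imp_left.2 fun hnc => le_map fun s hs => ?_
  obtain ⟨r, hr, hfr⟩ := Metric.eventually_nhds_iff_ball.1 hf
  obtain ⟨ρ, hρ, hρs⟩ := Metric.mem_nhds_iff.1 (inter_mem hs (ball_mem_nhds a hr))
  obtain ⟨b, hb, hfb⟩ := frequently_iff.1 (not_eventually.1 hnc) (ball_mem_nhds a hρ)
  -- the one-variable open mapping theorem on the line through `a` and `b`, where `f b ≠ f a`
  set T := {t : ℂ | a + t • (b - a) ∈ ball a ρ}
  have hφ : AnalyticOnNhd ℂ (fun t : ℂ => f (a + t • (b - a))) T :=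
    DifferentiableOn.analyticOnNhd_comp_line
      (fun z hz => (hfr z (hρs hz).2).differentiableWithinAt) isOpen_ball a (b - a)
  have h0 : (0 : ℂ) ∈ T := by simpa [T] using hρ
  rcases (hφ 0 h0).eventually_constant_or_nhds_le_map_nhds with hconst | hmap
  · have h1 : (1 : ℂ) ∈ T := by simpa [T, dist_eq_norm] using hb
    have := hφ.eqOn_of_preconnected_of_eventuallyEq analyticOnNhd_const
      ((convex_ball a ρ).setOf_add_smul_mem a (b - a)).isPreconnected h0 hconst h1
    exact absurd (by simpa using this) hfb
  · have hT : (fun t : ℂ => f (a + t • (b - a))) '' T ∈ 𝓝 (f a) := by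
      have hTo : IsOpen T := isOpen_ball.preimage (by fun_prop)
      simpa using hmap (image_mem_map (hTo.mem_nhds h0))
    refine mem_of_superset hT ?_
    rintro _ ⟨t, ht, rfl⟩
    exact ⟨_, (hρs ht).1, rfl⟩

end ComplexLines

theorem mem_closure_graph_of_mapClusterPt {X Y Z : Type*} [TopologicalSpace X]
    [TopologicalSpace Y] [TopologicalSpace Z] {f : X → Z} {u : Z → Y} {a : X} {c : Y}
    (hf : 𝓝 (f a) ≤ map f (𝓝 a)) (hu : MapClusterPt c (𝓝[≠] (f a)) u) :
    (a, c) ∈ closure {p : X × Y | f p.1 ≠ f a ∧ p.2 = u (f p.1)} := by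
  refine mem_closure_iff_nhds.2 fun t ht => ?_
  obtain ⟨A, hA, C, hC, hAC⟩ := mem_nhds_prod_iff.1 ht
  have hfA : f '' A ∩ {f a}ᶜ ∈ 𝓝[≠] (f a) :=
    inter_mem (mem_nhdsWithin_of_mem_nhds (hf (image_mem_map hA))) self_mem_nhdsWithin
  obtain ⟨_, huC, ⟨x, hx, rfl⟩, hne⟩ :=
    ((mapClusterPt_iff_frequently.1 hu C hC).and_eventually hfA).exists
  exact ⟨(x, u (f x)), hAC ⟨hx, huC⟩, hne, rfl⟩

theorem Complex.mapClusterPt_exp_inv (c : ℂ) : MapClusterPt c (𝓝[≠] 0) fun ζ => exp ζ⁻¹ := by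
  -- cluster points form a closed set, and `{0}ᶜ` is dense
  suffices h : ∀ c ≠ 0, MapClusterPt c (𝓝[≠] 0) fun ζ => exp ζ⁻¹ from
    isClosed_setOfPred_clusterPt.closure_subset_iff.2 h (dense_compl_singleton 0 c)
  intro c hc
  have hlim : Tendsto (fun k : ℕ => (log c + k * (2 * π * I))⁻¹) atTop (𝓝[≠] 0) := by
    refine tendsto_inv₀_cobounded'.comp ((tendsto_const_add_cobounded _).comp ?_)
    rw [← tendsto_norm_atTop_iff_cobounded]
    simpa [abs_of_pos Real.pi_pos] using
      tendsto_natCast_atTop_atTop.atTop_mul_const (by positivity : (0 : ℝ) < 2 * π)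
  have hexp : ∀ k : ℕ, exp (log c + k * (2 * π * I))⁻¹⁻¹ = c := fun k => by
    rw [inv_inv, exp_add, exp_log hc, exp_nat_mul_two_pi_mul_I, mul_one]
  refine mapClusterPt_iff_frequently.2 fun s hs => hlim.frequently ?_
  exact Frequently.of_forall fun k => (hexp k).symm ▸ mem_of_mem_nhds hs

theorem zeros_cluster_points_of_graph_general (n : ℕ)
    (U : Set (Cn (n+1))) (hU : IsOpen U)
    (U' : Set (Cn n)) (hU' : IsOpen U') (hU'conn : IsConnected U')
    (hproj : (fun z : Cn (n+1) => fun i : Fin n => z i.castSucc) '' U ⊆ U')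
    (F : Cn n → ℂ) (hF : HoloOn F U')
    (hFnc : ¬ ∃ c : ℂ, ∀ z ∈ U', F z = c) :
    ∀ w ∈ U, F (fun i => w i.castSucc) = 0 →
      w ∈ closure {z ∈ U | F (fun i => z i.castSucc) ≠ 0 ∧
        z (Fin.last n) = Complex.exp (1 / F (fun i => z i.castSucc))} := by
  intro w hw hw0
  change F (Fin.init w) = 0 at hw0
  have hwU' : Fin.init w ∈ U' := hproj ⟨w, hw, rfl⟩
  have hFopen : 𝓝 (F (Fin.init w)) ≤ map F (𝓝 (Fin.init w)) := by
    refine (eventually_constant_or_nhds_le_map_nhds_of_differentiableAt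
      (eventually_of_mem (hU'.mem_nhds hwU') hF)).resolve_left fun hconst => hFnc ?_
    exact ⟨_, DifferentiableOn.eqOn_of_preconnected_of_eventuallyEq
      (fun z hz => (hF z hz).differentiableWithinAt) (differentiableOn_const _) hU'
      hU'conn.isPreconnected hwU' hconst⟩
  have hgraph := mem_closure_graph_of_mapClusterPt hFopen
    (hw0 ▸ mapClusterPt_exp_inv (w (Fin.last n)))
  have hsnoc := mem_closure_image (f := fun p : Cn n × ℂ => (Fin.snoc p.1 p.2 : Cn (n + 1)))
    (by fun_prop) hgraph
  rw [Fin.snoc_init_self] at hsnoc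
  refine closure_mono ?_ (hU.inter_closure ⟨hw, hsnoc⟩)
  rintro _ ⟨hzU, ⟨x, s⟩, ⟨hx, hs : s = exp (F x)⁻¹⟩, rfl⟩
  refine ⟨hzU, ?_⟩
  simp only [Fin.snoc_castSucc, Fin.snoc_last, one_div]
  exact ⟨hw0 ▸ hx, hs⟩

/-- Every zero of `f(z) = F(z₁,…,zₙ)` in `U ⊆ ℂ^{n+1}` is a cluster
point of `W' = {f ≠ 0, z_{n+1} = exp(1/f)}` (from Example 4.1 of the paper). -/
theorem zeros_cluster_points_of_graph (n : ℕ) (hn : 1 ≤ n)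
    (U : Set (Cn (n+1))) (hU : IsOpen U)
    (U' : Set (Cn n)) (hU' : IsOpen U') (hU'conn : IsConnected U')
    (hproj : (fun z : Cn (n+1) => fun i : Fin n => z i.castSucc) '' U ⊆ U')
    (F : Cn n → ℂ) (hF : HoloOn F U')
    (hFnc : ¬ ∃ c : ℂ, ∀ z ∈ U', F z = c) :
    ∀ w ∈ U, F (fun i => w i.castSucc) = 0 →
      w ∈ closure {z ∈ U | F (fun i => z i.castSucc) ≠ 0 ∧
        z (Fin.last n) = Complex.exp (1 / F (fun i => z i.castSucc))} :=
  zeros_cluster_points_of_graph_general n U hU U' hU' hU'conn hproj F hF hFnc
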